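/- arXiv:2507.17493 — 3 statements merged into one kernel-verified Lean document; each statement's English description precedes it below -/
import Mathlib

section
/- If each atom of an interpretation I of a ground normal program P is founded via a level mapping ψ (i.e., justified by a rule whose positive body atoms have strictly smaller ψ-values), and I is a model of P, then I is a minimal model of the Gelfond–Lifschitz reduct P^I. -/
/-- A ground normal rule: at most one head atom, positive and negative body. -/
structure GRule (A : Type*) where
  head : Option A
  pos : Finset A
  neg : Finset A

/-- `I` satisfies a ground rule `r`. -/
def Satisfies {A : Type*} (I : Set A) (r : GRule A) : Prop :=
  (∃ a ∈ r.head, a ∈ I) ∨ ¬(↑r.pos ⊆ I) ∨ ∃ b ∈ r.neg, b ∈ I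

/-- `J` is a model of the Gelfond–Lifschitz reduct `P^I`. -/
def ModelsReduct {A : Type*} (P : Set (GRule A)) (I J : Set A) : Prop :=
  ∀ r ∈ P, (∀ b ∈ r.neg, b ∉ I) → ↑r.pos ⊆ J → ∃ a ∈ r.head, a ∈ J

/-- `I` is an answer set of `P`: a minimal model of the reduct `P^I`. -/
def IsAnswerSet {A : Type*} (P : Set (GRule A)) (I : Set A) : Prop :=
  ModelsReduct P I I ∧ ∀ J ⊂ I, ¬ ModelsReduct P I J

/-- Atom `a` is founded in `I` w.r.t. the level mapping `ψ`. -/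
def Founded {A : Type*} (P : Set (GRule A)) (I : Set A) (ψ : A → ℕ) (a : A) : Prop :=
  ∃ r ∈ P, r.head = some a ∧ ↑r.pos ⊆ I ∧ (∀ b ∈ r.neg, b ∉ I) ∧
    ∀ b ∈ r.pos, ψ b < ψ a

/-- If `I` is a model of `P` and every atom of `I` is founded w.r.t. an injective level
mapping `ψ`, then no proper subset of `I` is a model of the reduct `P^I`
(so `I` is a minimal model of `P^I`). -/
theorem founded_model_is_minimal_model_of_reduct {A : Type*} (P : Set (GRule A))
    (I : Set A) (ψ : A → ℕ) (hinj : Set.InjOn ψ I)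
    (hmod : ∀ r ∈ P, Satisfies I r)
    (hfound : ∀ a ∈ I, Founded P I ψ a) :
    ∀ J, J ⊂ I → ¬ ModelsReduct P I J := by
  intro J hJI hJ
  have key : ∀ n : ℕ, ∀ a ∈ I, ψ a = n → a ∈ J := by
    intro n
    induction n using Nat.strong_induction_on with
    | _ n ih =>
      intro a haI hψ
      obtain ⟨r, hrP, hhead, hpos, hneg, hlt⟩ := hfound a haI
      have hposJ : ↑r.pos ⊆ J := by
        intro b hb
        have hb' : b ∈ r.pos := hb
        exact ih (ψ b) (hψ ▸ hlt b hb') b (hpos hb) rfl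
      obtain ⟨c, hc, hcJ⟩ := hJ r hrP hneg hposJ
      have : c = a := by
        rw [hhead] at hc; simpa using hc.symm
      exact this ▸ hcJ
  exact hJI.2 (fun a ha => key (ψ a) a ha rfl)
end

section
/- Conversely, if I is an answer set of a ground normal program P (a minimal model of the reduct P^I), then there exists an injective level mapping ψ : I → {0,…,|I|-1} such that every atom of I is founded with respect to ψ. -/
/-!
The atoms of an answer set `I` are exactly those derived by iterating the immediate-consequence
operator `T` of the positive program `P^I` from `∅`: the union of the stages `T^k ∅` is a model
of `P^I` inside `I`, hence equals `I` by minimality. An atom first derived at stage `k + 1` is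
derived by a rule whose positive body lies in stage `k`, so its body atoms have smaller stage.
Ordering `I` by stage, with ties broken arbitrarily, and numbering it `0, …, |I| - 1` gives `ψ`.
-/

theorem Set.Finite.exists_injOn_lt_ncard_and_lt_of_lt {α β : Type*} [LinearOrder β]
    {s : Set α} (hs : s.Finite) (f : α → β) :
    ∃ ψ : α → ℕ, Set.InjOn ψ s ∧ (∀ a ∈ s, ψ a < s.ncard) ∧
      ∀ a ∈ s, ∀ b ∈ s, f a < f b → ψ a < ψ b := by
  let _ : LinearOrder α := WellOrderingRel.isWellOrder.linearOrder
  let key : α → β ×ₗ α := fun a => toLex (f a, a)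
  have key_injective : key.Injective := fun a b h => congrArg Prod.snd (toLex.injective h)
  let ψ : α → ℕ := fun a => {c ∈ s | key c < key a}.ncard
  have ψ_lt_of_key_lt {a b : α} (ha : a ∈ s) (hab : key a < key b) : ψ a < ψ b :=
    Set.ncard_lt_ncard
      ⟨fun c hc => ⟨hc.1, hc.2.trans hab⟩, fun hsub => (hsub ⟨ha, hab⟩).2.false⟩
      (hs.subset fun _ hc => hc.1)
  refine ⟨ψ, fun a ha b hb hψ => ?_, fun a ha => ?_, fun a ha b _ hf => ?_⟩
  · by_contra hne
    rcases lt_or_gt_of_ne (key_injective.ne hne) with hlt | hlt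
    · exact (ψ_lt_of_key_lt ha hlt).ne hψ
    · exact (ψ_lt_of_key_lt hb hlt).ne hψ.symm
  · exact Set.ncard_lt_ncard ⟨fun c hc => hc.1, fun hsub => (hsub ha).2.false⟩ hs
  · exact ψ_lt_of_key_lt ha (Prod.Lex.toLex_lt_toLex.mpr (Or.inl hf))

section Stages

variable {A : Type*} (P : Set (GRule A)) (I : Set A)

/-- The immediate-consequence operator `T_{P^I}` of the reduct. -/
def reductConsequence (J : Set A) : Set A :=
  {a | ∃ r ∈ P, r.head = some a ∧ (∀ b ∈ r.neg, b ∉ I) ∧ ↑r.pos ⊆ J}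

theorem monotone_reductConsequence : Monotone (reductConsequence P I) :=
  fun _ _ hJ _ ⟨r, hr, hhead, hneg, hpos⟩ => ⟨r, hr, hhead, hneg, hpos.trans hJ⟩

def reductStage (k : ℕ) : Set A :=
  (reductConsequence P I)^[k] ∅

@[simp]
theorem reductStage_zero : reductStage P I 0 = ∅ := rfl

theorem reductStage_succ (k : ℕ) :
    reductStage P I (k + 1) = reductConsequence P I (reductStage P I k) :=
  Function.iterate_succ_apply' _ _ _

theorem monotone_reductStage : Monotone (reductStage P I) :=
  (monotone_reductConsequence P I).monotone_iterate_of_le_map (Set.empty_subset _)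

/-- `0` for an atom that is never derived. -/
noncomputable def reductRank (a : A) : ℕ :=
  sInf {k | a ∈ reductStage P I k}

variable {P I}

theorem reductConsequence_subset (hI : ModelsReduct P I I) {J : Set A} (hJ : J ⊆ I) :
    reductConsequence P I J ⊆ I := by
  rintro a ⟨r, hr, hhead, hneg, hpos⟩
  obtain ⟨b, hb, hbI⟩ := hI r hr hneg (hpos.trans hJ)
  rw [hhead, Option.mem_some_iff] at hb
  exact hb ▸ hbI

theorem reductStage_subset (hI : ModelsReduct P I I) (k : ℕ) : reductStage P I k ⊆ I := by
  induction k with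
  | zero => exact Set.empty_subset _
  | succ k ih => exact (reductStage_succ P I k).symm ▸ reductConsequence_subset hI ih

theorem modelsReduct_iUnion_reductStage (hI : ModelsReduct P I I) :
    ModelsReduct P I (⋃ k, reductStage P I k) := by
  intro r hr hneg hpos
  obtain ⟨k, hk⟩ :=
    (monotone_reductStage P I).directed_le.exists_mem_subset_of_finset_subset_biUnion hpos
  obtain ⟨a, ha, -⟩ := hI r hr hneg (hk.trans (reductStage_subset hI k))
  refine ⟨a, ha, Set.mem_iUnion.mpr ⟨k + 1, ?_⟩⟩
  rw [reductStage_succ]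
  exact ⟨r, hr, Option.mem_def.mp ha, hneg, hk⟩

theorem IsAnswerSet.iUnion_reductStage (hI : IsAnswerSet P I) :
    ⋃ k, reductStage P I k = I := by
  by_contra hne
  exact hI.2 _ (ssubset_of_ne_of_subset hne (Set.iUnion_subset (reductStage_subset hI.1)))
    (modelsReduct_iUnion_reductStage hI.1)

theorem reductRank_le {a : A} {k : ℕ} (ha : a ∈ reductStage P I k) : reductRank P I a ≤ k :=
  Nat.sInf_le ha

theorem mem_reductStage_reductRank {a : A} {k : ℕ} (ha : a ∈ reductStage P I k) :
    a ∈ reductStage P I (reductRank P I a) :=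
  Nat.sInf_mem (s := {k | a ∈ reductStage P I k}) ⟨k, ha⟩

theorem founded_reductRank (hI : ModelsReduct P I I) {a : A} {k : ℕ}
    (ha : a ∈ reductStage P I k) : Founded P I (reductRank P I) a := by
  have ha' := mem_reductStage_reductRank ha
  rcases hm : reductRank P I a with _ | m
  · simp [hm] at ha'
  rw [hm, reductStage_succ] at ha'
  obtain ⟨r, hr, hhead, hneg, hpos⟩ := ha'
  refine ⟨r, hr, hhead, hpos.trans (reductStage_subset hI m), hneg, fun b hb => ?_⟩
  rw [hm]
  exact Nat.lt_succ_of_le (reductRank_le (hpos hb))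

theorem IsAnswerSet.founded_reductRank (hI : IsAnswerSet P I) {a : A} (ha : a ∈ I) :
    Founded P I (reductRank P I) a := by
  rw [← hI.iUnion_reductStage, Set.mem_iUnion] at ha
  obtain ⟨k, hk⟩ := ha
  exact _root_.founded_reductRank hI.1 hk

end Stages

theorem Founded.of_lt_imp_lt {A : Type*} {P : Set (GRule A)} {I : Set A} {φ ψ : A → ℕ} {a : A}
    (h : Founded P I φ a) (hφψ : ∀ b ∈ I, φ b < φ a → ψ b < ψ a) : Founded P I ψ a := by
  obtain ⟨r, hr, hhead, hpos, hneg, hlt⟩ := h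
  exact ⟨r, hr, hhead, hpos, hneg, fun b hb => hφψ b (hpos hb) (hlt b hb)⟩

theorem answer_set_has_level_mapping_general {A : Type*} (P : Set (GRule A))
    (I : Set A) (hI : I.Finite) (has : IsAnswerSet P I) :
    ∃ ψ : A → ℕ, Set.InjOn ψ I ∧ (∀ a ∈ I, ψ a < I.ncard) ∧
      ∀ a ∈ I, Founded P I ψ a := by
  obtain ⟨ψ, hinj, hlt, hψ⟩ := hI.exists_injOn_lt_ncard_and_lt_of_lt (reductRank P I)
  exact ⟨ψ, hinj, hlt, fun a ha =>
    (has.founded_reductRank ha).of_lt_imp_lt fun b hb hba => hψ b hb a ha hba⟩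

/-- If `I` is an answer set of a finite ground normal program `P`, then there is an
injective level mapping `ψ : I → {0,…,|I|-1}` such that every atom of `I` is founded. -/
theorem answer_set_has_level_mapping {A : Type*} (P : Set (GRule A)) (hP : P.Finite)
    (I : Set A) (hI : I.Finite) (has : IsAnswerSet P I) :
    ∃ ψ : A → ℕ, Set.InjOn ψ I ∧ (∀ a ∈ I, ψ a < I.ncard) ∧
      ∀ a ∈ I, Founded P I ψ a :=
  answer_set_has_level_mapping_general P I hI has
end

section
/- A tight ground normal program (no positive cycle in the dependency graph) has the property that every model I of P satisfying the local foundedness condition (each atom justified by some rule with true positive body, false negative body) is an answer set; i.e., for tight programs local justification implies the existence of a level mapping. -/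
/-- Positive dependency edge of `P`: `b` occurs in the positive body of a rule with head `h`. -/
def PosEdge {A : Type*} (P : Set (GRule A)) (b h : A) : Prop :=
  ∃ r ∈ P, r.head = some h ∧ b ∈ r.pos


section LevelMapping

variable {α : Type*}

open Relation

theorem Relation.isPartialOrder_reflTransGen_of_acyclic {R : α → α → Prop}
    (hR : ∀ a, ¬ TransGen R a a) : IsPartialOrder α (ReflTransGen R) where
  antisymm a b hab hba := by
    rcases reflTransGen_iff_eq_or_transGen.mp hab with h | hab'
    · exact h.symm
    rcases reflTransGen_iff_eq_or_transGen.mp hba with h | hba'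
    · exact h
    exact (hR a (hab'.trans hba')).elim

theorem Finset.card_filter_lt_card_filter_of_rel {s : α → α → Prop} [IsPartialOrder α s]
    [DecidableRel s] {T : Finset α} {a b : α} (ha : a ∈ T) (hba : s b a) (hne : b ≠ a) :
    (T.filter (s · b)).card < (T.filter (s · a)).card := by
  refine Finset.card_lt_card ⟨fun c hc => ?_, fun hsub => ?_⟩
  · simp only [Finset.mem_filter] at hc ⊢
    exact ⟨hc.1, _root_.trans_of s hc.2 hba⟩
  · have hab := (Finset.mem_filter.mp (hsub (Finset.mem_filter.mpr ⟨ha, refl_of s a⟩))).2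
    exact hne (antisymm_of s hba hab)

/-- A topological order of an acyclic relation, read off as positions in a linear extension
of its reflexive-transitive closure. -/
theorem Set.Finite.exists_injOn_lt_of_acyclic {R : α → α → Prop}
    (hR : ∀ a, ¬ TransGen R a a) {s : Set α} (hs : s.Finite) :
    ∃ ψ : α → ℕ, s.InjOn ψ ∧ ∀ a ∈ s, ∀ b, R b a → ψ b < ψ a := by
  classical
  have := isPartialOrder_reflTransGen_of_acyclic hR
  obtain ⟨t, ht, hle⟩ := extend_partialOrder (ReflTransGen R)
  have hlt : ∀ a ∈ s, ∀ b, t b a → b ≠ a →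
      (hs.toFinset.filter (t · b)).card < (hs.toFinset.filter (t · a)).card :=
    fun a ha b => Finset.card_filter_lt_card_filter_of_rel (hs.mem_toFinset.mpr ha)
  refine ⟨fun a => (hs.toFinset.filter (t · a)).card, fun a ha b hb hab => ?_,
    fun a ha b hba => hlt a ha b (hle _ _ (.single hba)) ?_⟩
  · by_contra hne
    rcases total_of t a b with h | h
    · exact (hlt b hb a h hne).ne hab
    · exact (hlt a ha b h (Ne.symm hne)).ne' hab
  · rintro rfl
    exact hR b (.single hba)

end LevelMapping

section AnswerSets

variable {A : Type*} {P : Set (GRule A)} {I : Set A}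

theorem modelsReduct_self_of_satisfies (hmod : ∀ r ∈ P, Satisfies I r) : ModelsReduct P I I := by
  intro r hr hneg hpos
  rcases hmod r hr with hhead | hpos' | ⟨b, hb, hbI⟩
  · exact hhead
  · exact absurd hpos hpos'
  · exact absurd hbI (hneg b hb)

theorem founded_of_justified {ψ : A → ℕ} (hψ : ∀ a ∈ I, ∀ b, PosEdge P b a → ψ b < ψ a)
    {a : A} (ha : a ∈ I)
    (hjust : ∃ r ∈ P, r.head = some a ∧ ↑r.pos ⊆ I ∧ ∀ b ∈ r.neg, b ∉ I) :
    Founded P I ψ a := by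
  obtain ⟨r, hr, hhead, hpos, hneg⟩ := hjust
  exact ⟨r, hr, hhead, hpos, hneg, fun b hb => hψ a ha b ⟨r, hr, hhead, hb⟩⟩

theorem not_modelsReduct_of_ssubset {ψ : A → ℕ} (hfound : ∀ a ∈ I, Founded P I ψ a)
    {J : Set A} (hJ : J ⊂ I) : ¬ ModelsReduct P I J := by
  intro hJmod
  obtain ⟨a, haI, haJ⟩ := Set.exists_of_ssubset hJ
  set m := Function.argminOn ψ (I \ J) ⟨a, haI, haJ⟩
  obtain ⟨hmI, hmJ⟩ : m ∈ I \ J := Function.argminOn_mem ψ _ _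
  obtain ⟨r, hr, hhead, hpos, hneg, hlt⟩ := hfound m hmI
  have hposJ : ↑r.pos ⊆ J := fun b hb => by
    by_contra hbJ
    exact Function.not_lt_argminOn ψ (I \ J) ⟨hpos hb, hbJ⟩ (hlt b hb)
  obtain ⟨c, hc, hcJ⟩ := hJmod r hr hneg hposJ
  rw [hhead, Option.mem_some_iff] at hc
  exact hmJ (hc ▸ hcJ)

theorem isAnswerSet_of_founded {ψ : A → ℕ} (hmod : ∀ r ∈ P, Satisfies I r)
    (hfound : ∀ a ∈ I, Founded P I ψ a) : IsAnswerSet P I :=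
  ⟨modelsReduct_self_of_satisfies hmod, fun _ hJ => not_modelsReduct_of_ssubset hfound hJ⟩

end AnswerSets

/-- For a tight ground normal program, every model in which each atom is locally justified
admits an injective level mapping witnessing foundedness, hence is an answer set. -/
theorem tight_supported_model_is_answer_set {A : Type*} (P : Set (GRule A))
    (htight : ∀ a, ¬ Relation.TransGen (PosEdge P) a a)
    (I : Set A) (hI : I.Finite)
    (hmod : ∀ r ∈ P, Satisfies I r)
    (hjust : ∀ a ∈ I, ∃ r ∈ P, r.head = some a ∧ ↑r.pos ⊆ I ∧ ∀ b ∈ r.neg, b ∉ I) :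
    ∃ ψ : A → ℕ, Set.InjOn ψ I ∧ (∀ a ∈ I, Founded P I ψ a) ∧ IsAnswerSet P I := by
  obtain ⟨ψ, hinj, hψ⟩ := hI.exists_injOn_lt_of_acyclic htight
  have hfound : ∀ a ∈ I, Founded P I ψ a := fun a ha => founded_of_justified hψ ha (hjust a ha)
  exact ⟨ψ, hinj, hfound, isAnswerSet_of_founded hmod hfound⟩
end
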